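/- If σ₁ > 0, then for every x ∈ ℝ_{++}^n the vectors b¹(x), b²(x), …, bⁿ(x) form a basis of ℝ^n; in particular, the Lie algebra generated by A¹ together with brackets against A⁰ spans ℝ^n at every point of ℝ_{++}^n. -/

import Mathlib

/-- View `x ∈ ℝ^n` (indexed by `Fin n`) as a function on species labels `1, …, n`. -/
def toFun (n : ℕ) (x : Fin n → ℝ) : ℕ → ℝ :=
  fun j => if h : 1 ≤ j ∧ j ≤ n then x ⟨j - 1, by omega⟩ else 0

/-- The drift field `F̃` of the Lotka–Volterra food chain (components indexed by `1 ≤ i ≤ n`). -/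
def Ft (n : ℕ) (ta : ℕ → ℕ → ℝ) (x : ℕ → ℝ) (i : ℕ) : ℝ :=
  if i = 1 then ta 1 0 - ta 1 1 * x 1 - ta 1 2 * x 2
  else if i = n then -ta n 0 + ta n (n - 1) * x (n - 1) - ta n n * x n
  else -ta i 0 + ta i (i - 1) * x (i - 1) - ta i i * x i - ta i (i + 1) * x (i + 1)

/-- The drift vector field `A⁰(x) = (x₁F̃₁(x), …, x_nF̃_n(x))`. -/
def A0 (n : ℕ) (ta : ℕ → ℕ → ℝ) (x : Fin n → ℝ) : Fin n → ℝ :=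
  fun i => x i * Ft n ta (toFun n x) ((i : ℕ) + 1)

/-- The Lie bracket `[V,W](x) = DW(x)V(x) − DV(x)W(x)` of two vector fields on `ℝ^n`. -/
noncomputable def lieB {n : ℕ} (V W : (Fin n → ℝ) → Fin n → ℝ) :
    (Fin n → ℝ) → Fin n → ℝ :=
  fun x => fderiv ℝ W x (V x) - fderiv ℝ V x (W x)

/-- The noise vector field `A¹(x) = σ₁x₁e₁`. -/
def A1 (n : ℕ) (σ1 : ℝ) (x : Fin n → ℝ) : Fin n → ℝ :=
  fun i => if (i : ℕ) = 0 then σ1 * x i else 0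

/-- The iterated brackets `b¹ = A¹`, `b^{k+1} = [b^k, A⁰]`. -/
noncomputable def bF (n : ℕ) (ta : ℕ → ℕ → ℝ) (σ1 : ℝ) : ℕ → (Fin n → ℝ) → Fin n → ℝ
  | 0 => A1 n σ1
  | 1 => A1 n σ1
  | (k + 2) => lieB (bF n ta σ1 (k + 1)) (A0 n ta)

/-! ### Auxiliary material -/

/-- `ccc k = σ₁ ∏_{i=2}^{k} ã_{i,i-1}`, the coefficient of the leading term of `b^k`. -/
def ccc (ta : ℕ → ℕ → ℝ) (σ1 : ℝ) : ℕ → ℝ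
  | 0 => σ1
  | 1 => σ1
  | (k + 2) => ccc ta σ1 (k + 1) * ta (k + 2) (k + 1)

/-- `PP n k x = x₁ ⋯ x_k`. -/
def PP (n k : ℕ) (x : Fin n → ℝ) : ℝ := ∏ i : Fin n, if (i : ℕ) < k then x i else 1

lemma PP_zero (n : ℕ) (x : Fin n → ℝ) : PP n 0 x = 1 := by simp [PP]

lemma PP_succ (n k : ℕ) (hk : k < n) (x : Fin n → ℝ) :
    PP n (k + 1) x = PP n k x * x ⟨k, hk⟩ := by
  have key : ∀ i : Fin n, (if (i : ℕ) < k + 1 then x i else 1)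
      = (if (i : ℕ) < k then x i else 1) * (if i = ⟨k, hk⟩ then x i else 1) := by
    intro i
    by_cases h1 : (i : ℕ) < k
    · have h2 : i ≠ ⟨k, hk⟩ := by
        intro h; apply absurd h1; simp [h]
      simp [h1, h2, Nat.lt_succ_of_lt h1]
    · by_cases h2 : i = ⟨k, hk⟩
      · have : (i : ℕ) < k + 1 := by simp [h2]
        simp [h1, h2, this]
      · have h3 : ¬ ((i : ℕ) < k + 1) := by
          have : (i : ℕ) ≠ k := fun h => h2 (Fin.ext h)
          omega
        simp [h1, h2, h3]
  rw [PP, Finset.prod_congr rfl (fun i _ => key i), Finset.prod_mul_distrib]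
  rw [Finset.prod_ite_eq' Finset.univ (⟨k, hk⟩ : Fin n) (fun i => x i)]
  simp [PP]

lemma PP_pos (n k : ℕ) (x : Fin n → ℝ) (hx : ∀ i, 0 < x i) : 0 < PP n k x := by
  refine Finset.prod_pos fun i _ => ?_
  split
  · exact hx i
  · norm_num

lemma ccc_pos (n : ℕ) (ta : ℕ → ℕ → ℝ) (σ1 : ℝ) (hσ1 : 0 < σ1)
    (hlow : ∀ i, 2 ≤ i → i ≤ n → 0 < ta i (i - 1)) :
    ∀ k, k ≤ n → 0 < ccc ta σ1 k := by
  intro k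
  induction k with
  | zero => intro _; exact hσ1
  | succ k ih =>
    intro hk
    match k, ih with
    | 0, _ => exact hσ1
    | (m + 1), ih =>
      have h1 : 0 < ta (m + 2) (m + 1) := by
        have := hlow (m + 2) (by omega) (by omega)
        simpa using this
      exact mul_pos (ih (by omega)) h1

section Analysis

variable {n : ℕ}

/-- Derivative of the basic quadratic building block, applied to a vector. -/
lemma quad_fderiv_apply (p q r : Fin n) (a b c d : ℝ) (x v : Fin n → ℝ) :
    fderiv ℝ (fun y : Fin n → ℝ => y p * (a + b * y q + c * y p + d * y r)) x v
      = v p * (a + b * x q + c * x p + d * x r) + x p * (b * v q + c * v p + d * v r) := by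
  have hp : HasFDerivAt (fun y : Fin n → ℝ => y p)
      (ContinuousLinearMap.proj p : (Fin n → ℝ) →L[ℝ] ℝ) x := hasFDerivAt_apply p x
  have hq : HasFDerivAt (fun y : Fin n → ℝ => y q)
      (ContinuousLinearMap.proj q : (Fin n → ℝ) →L[ℝ] ℝ) x := hasFDerivAt_apply q x
  have hr : HasFDerivAt (fun y : Fin n → ℝ => y r)
      (ContinuousLinearMap.proj r : (Fin n → ℝ) →L[ℝ] ℝ) x := hasFDerivAt_apply r x
  have haff : HasFDerivAt (fun y : Fin n → ℝ => a + b * y q + c * y p + d * y r)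
      ((((0 : (Fin n → ℝ) →L[ℝ] ℝ) + b • ContinuousLinearMap.proj q)
        + c • ContinuousLinearMap.proj p) + d • ContinuousLinearMap.proj r) x :=
    (((hasFDerivAt_const a x).add (hq.const_mul b)).add (hp.const_mul c)).add (hr.const_mul d)
  have H : HasFDerivAt (fun y : Fin n → ℝ => y p * (a + b * y q + c * y p + d * y r)) _ x :=
    hp.mul haff
  rw [H.fderiv]
  simp only [ContinuousLinearMap.add_apply, ContinuousLinearMap.coe_smul', Pi.smul_apply,
    ContinuousLinearMap.proj_apply, ContinuousLinearMap.zero_apply, smul_eq_mul]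
  ring

lemma quad_differentiableAt (p q r : Fin n) (a b c d : ℝ) (x : Fin n → ℝ) :
    DifferentiableAt ℝ (fun y : Fin n → ℝ => y p * (a + b * y q + c * y p + d * y r)) x := by
  have hp : DifferentiableAt ℝ (fun y : Fin n → ℝ => y p) x :=
    (hasFDerivAt_apply p x).differentiableAt
  have hq : DifferentiableAt ℝ (fun y : Fin n → ℝ => y q) x :=
    (hasFDerivAt_apply q x).differentiableAt
  have hr : DifferentiableAt ℝ (fun y : Fin n → ℝ => y r) x :=
    (hasFDerivAt_apply r x).differentiableAt
  exact hp.mul ((((differentiableAt_const a).add (hq.const_mul b)).add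
    (hp.const_mul c)).add (hr.const_mul d))

lemma quad_contDiff (p q r : Fin n) (a b c d : ℝ) :
    ContDiff ℝ (⊤ : ℕ∞) (fun y : Fin n → ℝ => y p * (a + b * y q + c * y p + d * y r)) := by
  have hp : ContDiff ℝ (⊤ : ℕ∞) (fun y : Fin n → ℝ => y p) := contDiff_apply ℝ ℝ p
  have hq : ContDiff ℝ (⊤ : ℕ∞) (fun y : Fin n → ℝ => y q) := contDiff_apply ℝ ℝ q
  have hr : ContDiff ℝ (⊤ : ℕ∞) (fun y : Fin n → ℝ => y r) := contDiff_apply ℝ ℝ r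
  exact hp.mul (((contDiff_const.add (contDiff_const.mul hq)).add
    (contDiff_const.mul hp)).add (contDiff_const.mul hr))

variable (ta : ℕ → ℕ → ℝ)

/-- First component of `A⁰` in normal form. -/
lemma A0_comp0 (hn : 2 ≤ n) (j : Fin n) (hj : (j : ℕ) = 0) :
    (fun y : Fin n → ℝ => A0 n ta y j)
      = fun y => y j * (ta 1 0 + (-(ta 1 2)) * y ⟨1, by omega⟩ + (-(ta 1 1)) * y j
          + 0 * y j) := by
  funext y
  have h1 : (1 : ℕ) ≤ 1 ∧ 1 ≤ n := ⟨le_refl 1, by omega⟩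
  have h2 : (1 : ℕ) ≤ 2 ∧ 2 ≤ n := ⟨by omega, hn⟩
  have hjj : j = ⟨0, by omega⟩ := Fin.ext hj
  simp only [A0, Ft, toFun, hj, zero_add, if_pos rfl, dif_pos h1, dif_pos h2, hjj,
    eq_self_iff_true, if_true]
  ring

/-- Middle components of `A⁰` in normal form. -/
lemma A0_comp_mid (j : Fin n) (h1 : 1 ≤ (j : ℕ)) (h2 : (j : ℕ) + 1 < n) :
    (fun y : Fin n → ℝ => A0 n ta y j)
      = fun y => y j * ((-(ta ((j : ℕ) + 1) 0))
          + ta ((j : ℕ) + 1) (j : ℕ) * y ⟨(j : ℕ) - 1, by omega⟩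
          + (-(ta ((j : ℕ) + 1) ((j : ℕ) + 1))) * y j
          + (-(ta ((j : ℕ) + 1) ((j : ℕ) + 2))) * y ⟨(j : ℕ) + 1, h2⟩) := by
  funext y
  have hne1 : ¬ ((j : ℕ) + 1 = 1) := by omega
  have hnen : ¬ ((j : ℕ) + 1 = n) := by omega
  have ha : (1 : ℕ) ≤ (j : ℕ) ∧ (j : ℕ) ≤ n := ⟨h1, by omega⟩
  have hb : (1 : ℕ) ≤ (j : ℕ) + 1 ∧ (j : ℕ) + 1 ≤ n := ⟨by omega, by omega⟩
  have hc : (1 : ℕ) ≤ (j : ℕ) + 2 ∧ (j : ℕ) + 2 ≤ n := ⟨by omega, by omega⟩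
  have e1 : (j : ℕ) + 1 - 1 = (j : ℕ) := by omega
  have e2 : (j : ℕ) + 1 - 1 - 1 = (j : ℕ) - 1 := by omega
  have e3 : (j : ℕ) + 1 + 1 = (j : ℕ) + 2 := rfl
  have e4 : (j : ℕ) + 2 - 1 = (j : ℕ) + 1 := by omega
  have hjy : y ⟨(j : ℕ) + 1 - 1, by omega⟩ = y j := by
    congr 1 <;> exact Fin.ext (by omega)
  simp only [A0, Ft, toFun, if_neg hne1, if_neg hnen, e1, e2, e3, e4,
    dif_pos ha, dif_pos hb, dif_pos hc, hjy]
  ring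

/-- Last component of `A⁰` in normal form. -/
lemma A0_comp_last (j : Fin n) (hn : 2 ≤ n) (h1 : 1 ≤ (j : ℕ)) (h2 : (j : ℕ) + 1 = n) :
    (fun y : Fin n → ℝ => A0 n ta y j)
      = fun y => y j * ((-(ta ((j : ℕ) + 1) 0))
          + ta ((j : ℕ) + 1) (j : ℕ) * y ⟨(j : ℕ) - 1, by omega⟩
          + (-(ta ((j : ℕ) + 1) ((j : ℕ) + 1))) * y j
          + 0 * y j) := by
  funext y
  have hne1 : ¬ ((j : ℕ) + 1 = 1) := by omega
  have ha : (1 : ℕ) ≤ (j : ℕ) ∧ (j : ℕ) ≤ n := ⟨h1, by omega⟩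
  have hb : (1 : ℕ) ≤ (j : ℕ) + 1 ∧ (j : ℕ) + 1 ≤ n := ⟨by omega, by omega⟩
  have e1 : n - 1 = (j : ℕ) := by omega
  have hcn : (1 : ℕ) ≤ n ∧ n ≤ n := ⟨by omega, le_refl n⟩
  have hjy : y ⟨(j : ℕ) + 1 - 1, by omega⟩ = y j := by
    congr 1 <;> exact Fin.ext (by omega)
  simp only [A0, Ft, toFun, if_neg hne1, if_pos h2, e1,
    Nat.add_sub_cancel, dif_pos ha, dif_pos hb, dif_pos hcn, Fin.eta, hjy]
  simp only [← h2]
  ring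

lemma A0_contDiff (hn : 2 ≤ n) : ContDiff ℝ (⊤ : ℕ∞) (A0 n ta) := by
  rw [contDiff_pi]
  intro j
  by_cases h0 : (j : ℕ) = 0
  · rw [A0_comp0 ta hn j h0]
    exact quad_contDiff j ⟨1, by omega⟩ j _ _ _ _
  · have h1 : 1 ≤ (j : ℕ) := by omega
    by_cases h2 : (j : ℕ) + 1 < n
    · rw [A0_comp_mid ta j h1 h2]
      exact quad_contDiff j ⟨(j : ℕ) - 1, by omega⟩ ⟨(j : ℕ) + 1, h2⟩ _ _ _ _
    · have h2' : (j : ℕ) + 1 = n := by have := j.isLt; omega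
      rw [A0_comp_last ta j hn h1 h2']
      exact quad_contDiff j ⟨(j : ℕ) - 1, by omega⟩ j _ _ _ _

lemma A0_differentiableAt (hn : 2 ≤ n) (x : Fin n → ℝ) :
    DifferentiableAt ℝ (A0 n ta) x :=
  ((A0_contDiff ta hn).differentiable (by simp)).differentiableAt

/-- The key formula for the derivative of a component of `A⁰` against a vector which
vanishes in coordinates `j` and `j+1`. -/
lemma A0_fderiv_apply (hn : 2 ≤ n) (j : Fin n) (h1 : 1 ≤ (j : ℕ)) (x v : Fin n → ℝ)
    (hv1 : v j = 0) (hvr : ∀ h : (j : ℕ) + 1 < n, v ⟨(j : ℕ) + 1, h⟩ = 0) :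
    fderiv ℝ (fun y : Fin n → ℝ => A0 n ta y j) x v
      = x j * (ta ((j : ℕ) + 1) (j : ℕ) * v ⟨(j : ℕ) - 1, by omega⟩) := by
  by_cases h2 : (j : ℕ) + 1 < n
  · rw [A0_comp_mid ta j h1 h2, quad_fderiv_apply, hv1, hvr h2]
    ring
  · have h2' : (j : ℕ) + 1 = n := by have := j.isLt; omega
    rw [A0_comp_last ta j hn h1 h2', quad_fderiv_apply, hv1]
    ring

/-- Componentwise formula for the Lie bracket of differentiable vector fields. -/
lemma lieB_apply (V W : (Fin n → ℝ) → Fin n → ℝ) (x : Fin n → ℝ)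
    (hV : DifferentiableAt ℝ V x) (hW : DifferentiableAt ℝ W x) (j : Fin n) :
    lieB V W x j = fderiv ℝ (fun y => W y j) x (V x) - fderiv ℝ (fun y => V y j) x (W x) := by
  have hWj : HasFDerivAt (fun y => W y j)
      ((ContinuousLinearMap.proj j : (Fin n → ℝ) →L[ℝ] ℝ).comp (fderiv ℝ W x)) x :=
    by have := (hasFDerivAt_apply j (W x)).comp x hW.hasFDerivAt; exact this
  have hVj : HasFDerivAt (fun y => V y j)
      ((ContinuousLinearMap.proj j : (Fin n → ℝ) →L[ℝ] ℝ).comp (fderiv ℝ V x)) x :=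
    by have := (hasFDerivAt_apply j (V x)).comp x hV.hasFDerivAt; exact this
  rw [hWj.fderiv, hVj.fderiv]
  simp [lieB, ContinuousLinearMap.comp_apply, ContinuousLinearMap.proj_apply]

lemma lieB_contDiff (V W : (Fin n → ℝ) → Fin n → ℝ)
    (hV : ContDiff ℝ (⊤ : ℕ∞) V) (hW : ContDiff ℝ (⊤ : ℕ∞) W) : ContDiff ℝ (⊤ : ℕ∞) (lieB V W) := by
  have h1 : ContDiff ℝ (⊤ : ℕ∞) fun x => fderiv ℝ W x (V x) :=
    (hW.fderiv_right (le_refl _)).clm_apply hV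
  have h2 : ContDiff ℝ (⊤ : ℕ∞) fun x => fderiv ℝ V x (W x) :=
    (hV.fderiv_right (le_refl _)).clm_apply hW
  exact h1.sub h2

lemma A1_contDiff (σ1 : ℝ) : ContDiff ℝ (⊤ : ℕ∞) (A1 n σ1) := by
  rw [contDiff_pi]
  intro i
  by_cases h : (i : ℕ) = 0
  · simp only [A1, h, if_pos rfl]
    exact contDiff_const.mul
      (ContinuousLinearMap.proj i : (Fin n → ℝ) →L[ℝ] ℝ).contDiff
  · simp only [A1, h, if_false]
    exact contDiff_const

/-- The main structural invariant of the iterated brackets. -/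
lemma bF_invariant (hn : 2 ≤ n) (ta : ℕ → ℕ → ℝ) (σ1 : ℝ) :
    ∀ k, 1 ≤ k → k ≤ n →
      ContDiff ℝ (⊤ : ℕ∞) (bF n ta σ1 k) ∧
      (∀ j : Fin n, k ≤ (j : ℕ) → ∀ x, bF n ta σ1 k x j = 0) ∧
      (∀ (hk : k - 1 < n) (x : Fin n → ℝ),
        bF n ta σ1 k x ⟨k - 1, hk⟩ = ccc ta σ1 k * PP n k x) := by
  intro k
  induction k with
  | zero => omega
  | succ k ih =>
    intro _ hkn
    match k, ih with
    | 0, _ =>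
      refine ⟨A1_contDiff σ1, ?_, ?_⟩
      · intro j hj x
        have : ¬ ((j : ℕ) = 0) := by omega
        simp [bF, A1, this]
      · intro hk x
        have h0 : (0 : ℕ) < n := by omega
        have hPP : PP n 1 x = x ⟨0, h0⟩ := by
          rw [show (1 : ℕ) = 0 + 1 from rfl, PP_succ n 0 h0 x, PP_zero]
          ring
        simp only [bF, A1, ccc, hPP]
        norm_num
    | (m + 1), ih =>
      set k := m + 1 with hkdef
      obtain ⟨hS, hZ, hL⟩ := ih (by omega) (by omega)
      have hbf : bF n ta σ1 (k + 1) = lieB (bF n ta σ1 k) (A0 n ta) := rfl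
      have hA0cd := A0_contDiff ta hn
      constructor
      · rw [hbf]
        exact lieB_contDiff _ _ hS hA0cd
      have key : ∀ (j : Fin n), k ≤ (j : ℕ) → ∀ x,
          bF n ta σ1 (k + 1) x j
            = x j * (ta ((j : ℕ) + 1) (j : ℕ) * bF n ta σ1 k x ⟨(j : ℕ) - 1, by omega⟩) := by
        intro j hj x
        have hVd : DifferentiableAt ℝ (bF n ta σ1 k) x :=
          (hS.differentiable (by simp)).differentiableAt
        have hWd := A0_differentiableAt ta hn x
        rw [hbf, lieB_apply _ _ x hVd hWd j]
        have hzero : (fun y => bF n ta σ1 k y j) = fun _ => (0 : ℝ) :=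
          funext fun y => hZ j hj y
        rw [hzero, fderiv_fun_const]
        simp only [ContinuousLinearMap.zero_apply, Pi.zero_apply, sub_zero]
        exact A0_fderiv_apply ta hn j (by omega) x _ (hZ j hj x)
          (fun h => hZ ⟨(j : ℕ) + 1, h⟩ (show k ≤ (j : ℕ) + 1 by omega) x)
      refine ⟨?_, ?_⟩
      · intro j hj x
        rw [key j (by omega) x]
        have : bF n ta σ1 k x ⟨(j : ℕ) - 1, by omega⟩ = 0 :=
          hZ ⟨(j : ℕ) - 1, by omega⟩ (show k ≤ (j : ℕ) - 1 by omega) x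
        rw [this]
        ring
      · intro hk1 x
        have hkn' : k < n := by omega
        have e0 : (k + 1) - 1 = k := by omega
        have hj : ((⟨k + 1 - 1, hk1⟩ : Fin n) : ℕ) = k := by simp [e0]
        rw [key ⟨k + 1 - 1, hk1⟩ (by simp [hj]) x]
        have hlead : bF n ta σ1 k x ⟨((⟨k + 1 - 1, hk1⟩ : Fin n) : ℕ) - 1, by omega⟩
            = ccc ta σ1 k * PP n k x := by
          have : (⟨((⟨k + 1 - 1, hk1⟩ : Fin n) : ℕ) - 1, by omega⟩ : Fin n)
              = ⟨k - 1, by omega⟩ := by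
            apply Fin.ext
            simp [hj]
          rw [this]
          exact hL (by omega) x
        rw [hlead]
        have hx1 : x ⟨k + 1 - 1, hk1⟩ = x ⟨k, hkn'⟩ := by
          congr 1 <;> exact Fin.ext (by omega)
        have hcc : ccc ta σ1 (k + 1) = ccc ta σ1 k * ta (k + 1) k := rfl
        rw [PP_succ n k hkn' x, hx1, hcc, hj]
        ring

end Analysis

/-- If `σ₁ > 0` then, at every `x ∈ ℝ_{++}^n`, the iterated brackets
`b¹(x), …, bⁿ(x)` form a basis of `ℝ^n` (they are linearly independent and span `ℝ^n`),
i.e. the strong Hörmander condition holds on `ℝ_{++}^n`. -/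
theorem stmt17 (n : ℕ) (hn : 2 ≤ n) (ta : ℕ → ℕ → ℝ) (σ1 : ℝ) (hσ1 : 0 < σ1)
    (hi0 : ∀ i, 2 ≤ i → i ≤ n → 0 < ta i 0)
    (h11 : 0 < ta 1 1)
    (hii : ∀ i, 2 ≤ i → i ≤ n → 0 ≤ ta i i)
    (hlow : ∀ i, 2 ≤ i → i ≤ n → 0 < ta i (i - 1))
    (hup : ∀ i, 1 ≤ i → i ≤ n - 1 → 0 < ta i (i + 1)) :
    ∀ x : Fin n → ℝ, (∀ i, 0 < x i) →
      LinearIndependent ℝ (fun k : Fin n => bF n ta σ1 ((k : ℕ) + 1) x) ∧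
      Submodule.span ℝ (Set.range (fun k : Fin n => bF n ta σ1 ((k : ℕ) + 1) x)) = ⊤ := by
  intro x hx
  set M : Matrix (Fin n) (Fin n) ℝ := Matrix.of (fun k j => bF n ta σ1 ((k : ℕ) + 1) x j)
    with hM
  have inv := bF_invariant hn ta σ1
  have htri : M.BlockTriangular OrderDual.toDual := by
    intro i j hij
    have hij' : (i : ℕ) < (j : ℕ) := hij
    exact (inv ((i : ℕ) + 1) (by omega) (by omega)).2.1 j (by omega) x
  have hdiag : ∀ k : Fin n, M k k = ccc ta σ1 ((k : ℕ) + 1) * PP n ((k : ℕ) + 1) x := by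
    intro k
    have hk1 : (k : ℕ) + 1 - 1 < n := by have := k.isLt; omega
    have he : (⟨(k : ℕ) + 1 - 1, hk1⟩ : Fin n) = k := by
      apply Fin.ext; simp
    have := (inv ((k : ℕ) + 1) (by omega) (by have := k.isLt; omega)).2.2 hk1 x
    rw [he] at this
    exact this
  have hpos : ∀ k : Fin n, 0 < M k k := by
    intro k
    rw [hdiag k]
    exact mul_pos (ccc_pos n ta σ1 hσ1 hlow ((k : ℕ) + 1) (by have := k.isLt; omega))
      (PP_pos n _ x hx)
  have hdet : M.det = ∏ k : Fin n, M k k := Matrix.det_of_lowerTriangular M htri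
  have hdetpos : 0 < M.det := by
    rw [hdet]
    exact Finset.prod_pos fun k _ => hpos k
  have hU : IsUnit M := (Matrix.isUnit_iff_isUnit_det M).mpr
    (isUnit_iff_ne_zero.mpr (ne_of_gt hdetpos))
  have hLI : LinearIndependent ℝ (fun i : Fin n => M i) :=
    Matrix.linearIndependent_rows_iff_isUnit.mpr hU
  have hfam : (fun k : Fin n => bF n ta σ1 ((k : ℕ) + 1) x) = fun i : Fin n => M i := rfl
  haveI : Nonempty (Fin n) := ⟨⟨0, by omega⟩⟩
  refine ⟨hfam ▸ hLI, ?_⟩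
  rw [hfam]
  exact hLI.span_eq_top_of_card_eq_finrank
    (by simp [Module.finrank_fintype_fun_eq_card])
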